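/- Let φ(x) := ψ(x) + 1/(2x) - log x, where ψ = Γ'/Γ is the digamma function. Then for every real α > 0, Σ_{n=1}^∞ φ(nα) = -(2π/α) ∫_0^∞ (1/(e^{2πt} - 1)) ( 1/(e^{2πt/α} - 1) - α/(2πt) + 1/2 ) dt; in particular the series converges and the integral converges. -/

import Mathlib

/-!
Binet's formula `φ(x) = -∫₀^∞ e^{-xs} f(s) ds`, with `f(s) = 1/(eˢ - 1) - 1/s + 1/2`, holds
because both sides change by `1/(2x) + 1/(2(x+1)) - log((x+1)/x)` when `x` is replaced by
`x + 1` (for `φ` by `ψ(x+1) = ψ(x) + 1/x`, for the integral by Frullani's integral), and both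
tend to `0` as `x → ∞` (for `φ` by convexity of `log Γ`, for the integral since
`0 ≤ f(s) ≤ s/4`). Putting `x = nα` and summing the geometric series
`∑ₙ e^{-nαs} = 1/(e^{αs} - 1)` under the integral gives `∑ φ(nα) = -∫₀^∞ f(s)/(e^{αs} - 1) ds`;
the substitution `s = 2πt/α` gives the stated form.
-/

open Real MeasureTheory Filter

/-- The digamma function `ψ = Γ'/Γ`. -/
noncomputable def digamma (x : ℝ) : ℝ := deriv Real.Gamma x / Real.Gamma x

/-- `φ(x) := ψ(x) + 1/(2x) - log x`. -/
noncomputable def phi (x : ℝ) : ℝ := digamma x + 1 / (2 * x) - Real.log x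

open Set Topology

lemma exp_mul_two_sub_le {s : ℝ} (hs : 0 ≤ s) : exp s * (2 - s) ≤ 2 + s := by
  have hmono : MonotoneOn (fun y => 2 + y - exp y * (2 - y)) (Ici 0) := by
    refine monotoneOn_of_hasDerivWithinAt_nonneg (f' := fun y => 1 - exp y * (1 - y))
      (convex_Ici 0) (by fun_prop) (fun y _ => ?_) (fun y _ => ?_)
    · exact ((((hasDerivAt_id' y).const_add 2).sub
        ((hasDerivAt_exp y).mul ((hasDerivAt_id' y).const_sub 2))).congr_deriv
        (by ring)).hasDerivWithinAt
    · -- `1 - y ≤ exp (-y)`, multiplied by `exp y`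
      have h := add_one_le_exp (-y)
      have : exp y * exp (-y) = 1 := by rw [← exp_add]; simp
      nlinarith [exp_pos y]
  simpa using hmono self_mem_Ici hs hs

lemma exp_sub_one_pos {s : ℝ} (hs : 0 < s) : 0 < exp s - 1 :=
  sub_pos.mpr (one_lt_exp_iff.mpr hs)

lemma mul_exp_half_le_exp_sub_one {y : ℝ} (hy : 0 ≤ y) : y * exp (y / 2) ≤ exp y - 1 := by
  have hsinh : y / 2 ≤ sinh (y / 2) := self_le_sinh_iff.mpr (by positivity)
  have h1 : exp (y / 2) * exp (y / 2) = exp y := by rw [← exp_add]; ring_nf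
  have h2 : exp (y / 2) * exp (-(y / 2)) = 1 := by rw [← exp_add]; simp
  rw [sinh_eq] at hsinh
  nlinarith [mul_le_mul_of_nonneg_left hsinh (exp_pos (y / 2)).le]

lemma integral_exp_neg_mul_Ioi {c : ℝ} (hc : 0 < c) : ∫ s in Ioi 0, exp (-(c * s)) = 1 / c := by
  simpa using integral_rpow_mul_exp_neg_mul_Ioi one_pos hc

lemma integral_mul_exp_neg_mul_Ioi {c : ℝ} (hc : 0 < c) :
    ∫ s in Ioi 0, s * exp (-(c * s)) = 1 / c ^ 2 := by
  simpa [show (2 : ℝ) - 1 = 1 by norm_num] using integral_rpow_mul_exp_neg_mul_Ioi two_pos hc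

lemma integrableOn_exp_neg_mul_Ioi {c : ℝ} (hc : 0 < c) :
    IntegrableOn (fun s => exp (-(c * s))) (Ioi 0) := by
  simpa using exp_neg_integrableOn_Ioi 0 hc

lemma integrableOn_mul_exp_neg_mul_Ioi {c : ℝ} (hc : 0 < c) :
    IntegrableOn (fun s => s * exp (-(c * s))) (Ioi 0) := by
  simpa using integrableOn_rpow_mul_exp_neg_mul_rpow (s := 1) (p := 1) (by norm_num) one_pos hc

noncomputable def binetKernel (s : ℝ) : ℝ := 1 / (exp s - 1) - 1 / s + 1 / 2

lemma binetKernel_nonneg {s : ℝ} (hs : 0 < s) : 0 ≤ binetKernel s := by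
  have hlow : (2 - s) / (2 * s) ≤ 1 / (exp s - 1) := by
    rw [div_le_div_iff₀ (by positivity) (exp_sub_one_pos hs)]
    linarith [exp_mul_two_sub_le hs.le]
  have : (2 - s) / (2 * s) = 1 / s - 1 / 2 := by field_simp
  rw [binetKernel]; linarith

lemma binetKernel_le {s : ℝ} (hs : 0 < s) : binetKernel s ≤ s / 4 := by
  have hq : 0 < 4 - 2 * s + s ^ 2 := by nlinarith [sq_nonneg (s - 1)]
  have hup : 1 / (exp s - 1) ≤ (4 - 2 * s + s ^ 2) / (4 * s) := by
    rw [div_le_div_iff₀ (exp_sub_one_pos hs) (by positivity)]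
    -- `exp s - 1 ≥ s + s²/2` already gives `(exp s - 1)(4 - 2s + s²) ≥ 4s + s⁴/2`
    nlinarith [quadratic_le_exp_of_nonneg hs.le, pow_pos hs 4]
  have : (4 - 2 * s + s ^ 2) / (4 * s) = 1 / s - 1 / 2 + s / 4 := by field_simp; ring
  rw [binetKernel]; linarith

lemma continuousOn_binetKernel : ContinuousOn binetKernel (Ioi 0) := by
  unfold binetKernel
  fun_prop (disch := intro s hs; first | exact (exp_sub_one_pos hs).ne' | exact (ne_of_gt hs))

noncomputable def binetIntegral (x : ℝ) : ℝ := ∫ s in Ioi 0, exp (-(x * s)) * binetKernel s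

lemma exp_neg_mul_mul_binetKernel_le {x s : ℝ} (hs : 0 < s) :
    exp (-(x * s)) * binetKernel s ≤ s * exp (-(x * s)) / 4 := by
  nlinarith [binetKernel_le hs, exp_pos (-(x * s))]

lemma integrableOn_exp_neg_mul_mul_binetKernel {x : ℝ} (hx : 0 < x) :
    IntegrableOn (fun s => exp (-(x * s)) * binetKernel s) (Ioi 0) := by
  refine ((integrableOn_mul_exp_neg_mul_Ioi hx).div_const 4).mono'
    ((by fun_prop : Continuous fun s => exp (-(x * s))).continuousOn.mul
      continuousOn_binetKernel |>.aestronglyMeasurable measurableSet_Ioi) ?_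
  filter_upwards [ae_restrict_mem measurableSet_Ioi] with s hs
  rw [norm_of_nonneg (mul_nonneg (exp_pos _).le (binetKernel_nonneg hs))]
  exact exp_neg_mul_mul_binetKernel_le hs

lemma binetIntegral_nonneg (x : ℝ) : 0 ≤ binetIntegral x :=
  setIntegral_nonneg measurableSet_Ioi fun _ hs => mul_nonneg (exp_pos _).le (binetKernel_nonneg hs)

lemma binetIntegral_le {x : ℝ} (hx : 0 < x) : binetIntegral x ≤ 1 / (4 * x ^ 2) := by
  calc binetIntegral x ≤ ∫ s in Ioi 0, s * exp (-(x * s)) / 4 :=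
        setIntegral_mono_on (integrableOn_exp_neg_mul_mul_binetKernel hx)
          ((integrableOn_mul_exp_neg_mul_Ioi hx).div_const 4) measurableSet_Ioi
          fun _ hs => exp_neg_mul_mul_binetKernel_le hs
    _ = 1 / (4 * x ^ 2) := by
        rw [integral_div, integral_mul_exp_neg_mul_Ioi hx]; ring

lemma tendsto_binetIntegral_atTop : Tendsto binetIntegral atTop (𝓝 0) :=
  squeeze_zero' (Eventually.of_forall binetIntegral_nonneg)
    (eventually_gt_atTop 0 |>.mono fun _ hx => binetIntegral_le hx)
    (tendsto_const_nhds.div_atTop ((tendsto_pow_atTop two_ne_zero).const_mul_atTop four_pos))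

lemma integrableOn_inv_mul_exp_neg_mul_sub {x : ℝ} (hx : 0 < x) :
    IntegrableOn (fun s => s⁻¹ * (exp (-(x * s)) - exp (-((x + 1) * s)))) (Ioi 0) := by
  refine (integrableOn_exp_neg_mul_Ioi hx).mono'
    (ContinuousOn.aestronglyMeasurable (by fun_prop (disch := intro s hs; exact ne_of_gt hs))
      measurableSet_Ioi) ?_
  filter_upwards [ae_restrict_mem measurableSet_Ioi] with s (hs : 0 < s)
  have hexp : exp (-((x + 1) * s)) = exp (-(x * s)) * exp (-s) := by rw [← exp_add]; ring_nf
  have hdiff : 0 ≤ exp (-(x * s)) - exp (-((x + 1) * s)) := by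
    rw [sub_nonneg, exp_le_exp]; nlinarith
  rw [norm_of_nonneg (mul_nonneg (inv_nonneg.mpr hs.le) hdiff), inv_mul_le_iff₀ hs, hexp]
  nlinarith [add_one_le_exp (-s), exp_pos (-(x * s))]

lemma integral_inv_mul_exp_neg_mul_sub {x : ℝ} (hx : 0 < x) :
    ∫ s in Ioi 0, s⁻¹ * (exp (-(x * s)) - exp (-((x + 1) * s))) = log ((x + 1) / x) := by
  have h := Frullani.integral_Ioi_eq (f := fun u => exp (-u)) (L := 1) (R := 0)
    ((by fun_prop : Continuous fun u : ℝ => exp (-u)).locallyIntegrable.locallyIntegrableOn _) hx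
    (by linarith : (0:ℝ) < x + 1) ?_ tendsto_exp_neg_atTop_nhds_zero
    (integrableOn_inv_mul_exp_neg_mul_sub hx)
  · simpa using h
  · simpa using ((by fun_prop : Continuous fun u : ℝ => exp (-u)).tendsto 0).mono_left
      nhdsWithin_le_nhds

lemma exp_neg_mul_sub_mul_binetKernel {x s : ℝ} (hs : 0 < s) :
    (exp (-(x * s)) - exp (-((x + 1) * s))) * binetKernel s =
      exp (-((x + 1) * s)) + (exp (-(x * s)) - exp (-((x + 1) * s))) / 2
        - s⁻¹ * (exp (-(x * s)) - exp (-((x + 1) * s))) := by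
  have hexp : exp (-(x * s)) = exp (-((x + 1) * s)) * exp s := by rw [← exp_add]; ring_nf
  have := (exp_sub_one_pos hs).ne'
  rw [binetKernel, hexp]
  field_simp
  ring

lemma binetIntegral_add_one {x : ℝ} (hx : 0 < x) :
    binetIntegral (x + 1) =
      binetIntegral x - (1 / (2 * x) + 1 / (2 * (x + 1)) - log ((x + 1) / x)) := by
  have hx1 : 0 < x + 1 := by linarith
  have hE := integrableOn_exp_neg_mul_Ioi hx
  have hE1 := integrableOn_exp_neg_mul_Ioi hx1
  have hdiff : binetIntegral x - binetIntegral (x + 1) =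
      ∫ s in Ioi 0, (exp (-(x * s)) - exp (-((x + 1) * s))) * binetKernel s := by
    rw [binetIntegral, binetIntegral, ← integral_sub
      (integrableOn_exp_neg_mul_mul_binetKernel hx) (integrableOn_exp_neg_mul_mul_binetKernel hx1)]
    simp only [sub_mul]
  have hhalf : IntegrableOn
      (fun s => (exp (-(x * s)) - exp (-((x + 1) * s))) / 2) (Ioi 0) := (hE.sub hE1).div_const 2
  have hsum : IntegrableOn
      (fun s => exp (-((x + 1) * s)) + (exp (-(x * s)) - exp (-((x + 1) * s))) / 2) (Ioi 0) :=
    hE1.add hhalf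
  rw [setIntegral_congr_fun measurableSet_Ioi fun s hs => exp_neg_mul_sub_mul_binetKernel hs,
    integral_sub hsum (integrableOn_inv_mul_exp_neg_mul_sub hx),
    integral_add hE1 hhalf, integral_div, integral_sub hE hE1,
    integral_exp_neg_mul_Ioi hx, integral_exp_neg_mul_Ioi hx1,
    integral_inv_mul_exp_neg_mul_sub hx] at hdiff
  field_simp at hdiff ⊢
  linarith

lemma hasDerivAt_log_comp_Gamma {x : ℝ} (hx : 0 < x) :
    HasDerivAt (log ∘ Gamma) (digamma x) x :=
  (differentiableAt_Gamma fun m => by linarith [(m.cast_nonneg : (0:ℝ) ≤ m)]).hasDerivAt.log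
    (Gamma_pos_of_pos hx).ne'

lemma log_Gamma_add_one {x : ℝ} (hx : 0 < x) : log (Gamma (x + 1)) = log (Gamma x) + log x := by
  rw [Gamma_add_one hx.ne', log_mul hx.ne' (Gamma_pos_of_pos hx).ne', add_comm]

lemma digamma_add_one {x : ℝ} (hx : 0 < x) : digamma (x + 1) = digamma x + x⁻¹ := by
  have hshift : HasDerivAt (fun y => (log ∘ Gamma) (y + 1)) (digamma (x + 1)) x :=
    (hasDerivAt_log_comp_Gamma (by linarith)).comp_add_const x 1
  have hrec : HasDerivAt (fun y => (log ∘ Gamma) y + log y) (digamma x + x⁻¹) x :=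
    (hasDerivAt_log_comp_Gamma hx).fun_add (hasDerivAt_log hx.ne')
  refine hshift.unique (hrec.congr_of_eventuallyEq ?_)
  filter_upwards [eventually_gt_nhds hx] with y hy using log_Gamma_add_one hy

lemma digamma_le_log {x : ℝ} (hx : 0 < x) : digamma x ≤ log x := by
  have h := convexOn_log_Gamma.deriv_le_slope (mem_Ioi.mpr hx) (mem_Ioi.mpr (by linarith))
    (lt_add_one x) (hasDerivAt_log_comp_Gamma hx).differentiableAt
  rwa [(hasDerivAt_log_comp_Gamma hx).deriv, slope_def_field, Function.comp_apply,
    Function.comp_apply, log_Gamma_add_one hx, add_sub_cancel_left, add_sub_cancel_left,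
    div_one] at h

lemma log_sub_one_le_digamma {x : ℝ} (hx : 1 < x) : log (x - 1) ≤ digamma x := by
  have hx0 : 0 < x := by linarith
  have hx1 : 0 < x - 1 := by linarith
  have h := convexOn_log_Gamma.slope_le_deriv (mem_Ioi.mpr hx1) (mem_Ioi.mpr hx0)
    (sub_one_lt x) (hasDerivAt_log_comp_Gamma hx0).differentiableAt
  have hrec := log_Gamma_add_one hx1
  rw [sub_add_cancel] at hrec
  rwa [(hasDerivAt_log_comp_Gamma hx0).deriv, slope_def_field, Function.comp_apply,
    Function.comp_apply, hrec, add_sub_cancel_left, sub_sub_cancel, div_one] at h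

lemma phi_add_one {x : ℝ} (hx : 0 < x) :
    phi (x + 1) = phi x + (1 / (2 * x) + 1 / (2 * (x + 1)) - log ((x + 1) / x)) := by
  rw [phi, phi, digamma_add_one hx, log_div (by linarith) hx.ne']
  field_simp
  ring

lemma abs_phi_le {x : ℝ} (hx : 1 < x) : |phi x| ≤ 1 / (x - 1) := by
  have hx0 : 0 < x := by linarith
  have hx1 : 0 < x - 1 := by linarith
  have hlog : -(1 / (x - 1)) ≤ log (x - 1) - log x := by
    have h := one_sub_inv_le_log_of_pos (div_pos hx1 hx0)
    rw [log_div hx1.ne' hx0.ne', inv_div] at h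
    have : 1 - x / (x - 1) = -(1 / (x - 1)) := by field_simp; ring
    linarith
  have hhalf : 1 / (2 * x) ≤ 1 / (x - 1) := one_div_le_one_div_of_le hx1 (by linarith)
  have hpos : 0 ≤ 1 / (2 * x) := by positivity
  rw [abs_le, phi]
  constructor <;> linarith [log_sub_one_le_digamma hx, digamma_le_log hx0]

lemma tendsto_phi_atTop : Tendsto phi atTop (𝓝 0) :=
  squeeze_zero_norm' (eventually_gt_atTop 1 |>.mono fun _ hx => abs_phi_le hx)
    (tendsto_const_nhds.div_atTop (tendsto_atTop_add_const_right _ (-1) tendsto_id))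

lemma phi_eq_neg_binetIntegral {x : ℝ} (hx : 0 < x) : phi x = -binetIntegral x := by
  have hperiodic : ∀ n : ℕ, phi (x + n) + binetIntegral (x + n) = phi x + binetIntegral x := by
    intro n
    induction n with
    | zero => simp
    | succ n ih =>
      have hxn : 0 < x + n := by positivity
      rw [Nat.cast_succ, ← add_assoc, phi_add_one hxn, binetIntegral_add_one hxn, ← ih]
      ring
  have hlim : Tendsto (fun n : ℕ => phi (x + n) + binetIntegral (x + n)) atTop (𝓝 0) := by
    have hxn := tendsto_atTop_add_const_left _ x tendsto_natCast_atTop_atTop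
    simpa using (tendsto_phi_atTop.comp hxn).add (tendsto_binetIntegral_atTop.comp hxn)
  simp only [hperiodic, tendsto_const_nhds_iff] at hlim
  linarith

lemma hasSum_exp_neg_succ_mul {y : ℝ} (hy : 0 < y) :
    HasSum (fun n : ℕ => exp (-((n + 1) * y))) (1 / (exp y - 1)) := by
  have hq : exp (-y) < 1 := exp_lt_one_iff.mpr (by linarith)
  have hterm (n : ℕ) : exp (-y) ^ n * exp (-y) = exp (-((n + 1) * y)) := by
    rw [← exp_nat_mul, ← exp_add]; ring_nf
  have hsum : (1 - exp (-y))⁻¹ * exp (-y) = 1 / (exp y - 1) := by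
    have := (exp_sub_one_pos hy).ne'
    rw [exp_neg]
    field_simp
  simpa only [hterm, hsum] using (hasSum_geometric_of_lt_one (exp_pos _).le hq).mul_right (exp (-y))

lemma div_exp_sub_one_mul_binetKernel_le {α s : ℝ} (hα : 0 < α) (hs : 0 < s) :
    1 / (exp (α * s) - 1) * binetKernel s ≤ 1 / (4 * α) * exp (-(α / 2 * s)) := by
  have hαs : 0 < α * s := by positivity
  calc 1 / (exp (α * s) - 1) * binetKernel s
      ≤ 1 / (α * s * exp (α * s / 2)) * (s / 4) := by
        refine mul_le_mul ?_ (binetKernel_le hs) (binetKernel_nonneg hs) (by positivity)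
        exact one_div_le_one_div_of_le (by positivity) (mul_exp_half_le_exp_sub_one hαs.le)
    _ = 1 / (4 * α) * exp (-(α / 2 * s)) := by
        rw [exp_neg, show α / 2 * s = α * s / 2 by ring]
        field_simp

lemma integrableOn_div_exp_sub_one_mul_binetKernel {α : ℝ} (hα : 0 < α) :
    IntegrableOn (fun s => 1 / (exp (α * s) - 1) * binetKernel s) (Ioi 0) := by
  have hcont : ContinuousOn (fun s => 1 / (exp (α * s) - 1)) (Ioi 0) := by
    fun_prop (disch := intro s hs; exact (exp_sub_one_pos (mul_pos hα hs)).ne')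
  refine ((integrableOn_exp_neg_mul_Ioi (half_pos hα)).const_mul (1 / (4 * α))).mono'
    ((hcont.mul continuousOn_binetKernel).aestronglyMeasurable measurableSet_Ioi) ?_
  filter_upwards [ae_restrict_mem measurableSet_Ioi] with s (hs : 0 < s)
  rw [norm_of_nonneg (mul_nonneg (one_div_pos.mpr (exp_sub_one_pos (mul_pos hα hs))).le
    (binetKernel_nonneg hs))]
  exact div_exp_sub_one_mul_binetKernel_le hα hs

lemma hasSum_binetIntegral_succ_mul {α : ℝ} (hα : 0 < α) :
    HasSum (fun n : ℕ => binetIntegral ((n + 1) * α))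
      (∫ s in Ioi 0, 1 / (exp (α * s) - 1) * binetKernel s) := by
  have hpos (n : ℕ) : 0 < (n + 1) * α := by positivity
  have hnorm (n : ℕ) : ∫ s in Ioi 0, ‖exp (-((n + 1) * α * s)) * binetKernel s‖ =
      binetIntegral ((n + 1) * α) :=
    setIntegral_congr_fun measurableSet_Ioi fun _ hs =>
      norm_of_nonneg (mul_nonneg (exp_pos _).le (binetKernel_nonneg hs))
  have hsummable : Summable fun n : ℕ => binetIntegral ((n + 1) * α) := by
    refine Summable.of_nonneg_of_le (fun n => binetIntegral_nonneg _)
      (fun n => binetIntegral_le (hpos n)) ?_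
    have h := ((summable_nat_add_iff 1).mpr (summable_one_div_nat_pow.mpr one_lt_two)).mul_left
      (1 / (4 * α ^ 2))
    refine h.congr fun n => ?_
    push_cast
    field_simp
  have hpointwise : ∀ s ∈ Ioi (0 : ℝ),
      ∑' n : ℕ, exp (-((n + 1) * α * s)) * binetKernel s =
        1 / (exp (α * s) - 1) * binetKernel s := fun s hs => by
    simp only [tsum_mul_right, mul_assoc, (hasSum_exp_neg_succ_mul (mul_pos hα hs)).tsum_eq]
  have h := hasSum_integral_of_summable_integral_norm (μ := volume.restrict (Ioi 0))
    (fun n => integrableOn_exp_neg_mul_mul_binetKernel (hpos n))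
    (by simpa only [hnorm] using hsummable)
  rwa [setIntegral_congr_fun measurableSet_Ioi hpointwise] at h

lemma div_exp_sub_one_mul_binetKernel_two_pi_div_mul {α : ℝ} (hα : 0 < α) (t : ℝ) :
    1 / (exp (α * (2 * π / α * t)) - 1) * binetKernel (2 * π / α * t) =
      1 / (exp (2 * π * t) - 1) *
        (1 / (exp (2 * π * t / α) - 1) - α / (2 * π * t) + 1 / 2) := by
  have h : α * (2 * π / α * t) = 2 * π * t := by field_simp
  rw [h, binetKernel, div_mul_eq_mul_div (2 * π) α t, one_div_div]

theorem sum_phi_eq_integral (α : ℝ) (hα : 0 < α) :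
    Summable (fun n : ℕ => phi ((n + 1) * α)) ∧
    IntegrableOn
      (fun t : ℝ => (1 / (Real.exp (2 * π * t) - 1)) *
        (1 / (Real.exp (2 * π * t / α) - 1) - α / (2 * π * t) + 1 / 2))
      (Set.Ioi (0 : ℝ)) ∧
    ∑' n : ℕ, phi ((n + 1) * α)
      = -(2 * π / α) *
          ∫ t in Set.Ioi (0 : ℝ),
            (1 / (Real.exp (2 * π * t) - 1)) *
              (1 / (Real.exp (2 * π * t / α) - 1) - α / (2 * π * t) + 1 / 2) := by
  have hc : 0 < 2 * π / α := by positivity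
  have hint := (integrableOn_Ioi_comp_mul_left_iff _ 0 hc).mpr
    (by simpa only [mul_zero] using integrableOn_div_exp_sub_one_mul_binetKernel hα)
  have hval := integral_comp_mul_left_Ioi' (fun s => 1 / (exp (α * s) - 1) * binetKernel s) 0 hc
  simp only [div_exp_sub_one_mul_binetKernel_two_pi_div_mul hα, mul_zero, smul_eq_mul]
    at hint hval
  have hphi (n : ℕ) : phi ((n + 1) * α) = -binetIntegral ((n + 1) * α) :=
    phi_eq_neg_binetIntegral (by positivity)
  have hsum := (hasSum_binetIntegral_succ_mul hα).neg
  simp only [← hphi] at hsum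
  refine ⟨hsum.summable, hint, ?_⟩
  rw [hsum.tsum_eq, ← hval, neg_mul]
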